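/- arXiv:2511.14316 — 7 statements merged into one kernel-verified Lean document; each statement's English description precedes it below -/
import Mathlib

section
/- (Apolarity Lemma, forward direction.) Let f ∈ ℂ[x,y]_d and let β_1, …, β_r ∈ ℂ be pairwise distinct with 1 ≤ r ≤ d+1. If there exist λ_1, …, λ_r ∈ ℂ such that f(x,y) = Σ_{k=1}^{r} λ_k (x+β_k y)^d, then ∏_{ℓ=1}^{r} (∂y − β_ℓ ∂x) ∘ f = 0. -/
/-!
`∂y − γ∂x` is a derivation sending `x + αy` to the constant `α − γ`, so it maps `c (x + αy)^n`
to `c n (α − γ) (x + αy)^(n-1)`. Hence every factor of the product preserves the multiples of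
powers of `x + αy`, and the factor with `γ = α` kills them; so each summand `λ_k (x + β_k y)^d`
is annihilated.
-/

open MvPolynomial

/-- The linear form `x + β y` in `ℂ[x,y]`. -/
noncomputable def linForm (β : ℂ) : MvPolynomial (Fin 2) ℂ := X 0 + C β * X 1

/-- The first-order differential operator `∂y − β ∂x` acting on `ℂ[x,y]`. -/
noncomputable def Dop (β : ℂ) : Module.End ℂ (MvPolynomial (Fin 2) ℂ) :=
  (pderiv (1 : Fin 2)).toLinearMap - β • (pderiv (0 : Fin 2)).toLinearMap

lemma Dop_linForm (γ α : ℂ) : Dop γ (linForm α) = C (α - γ) := by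
  simp [Dop, linForm, smul_eq_C_mul]

lemma Dop_eq_derivation (γ : ℂ) :
    Dop γ = ((pderiv (1 : Fin 2) - γ • pderiv (0 : Fin 2) :
      Derivation ℂ (MvPolynomial (Fin 2) ℂ) (MvPolynomial (Fin 2) ℂ)) : Module.End ℂ _) := rfl

lemma Dop_C_mul_linForm_pow (γ α c : ℂ) (n : ℕ) :
    Dop γ (C c * linForm α ^ n) = C (c * n * (α - γ)) * linForm α ^ (n - 1) := by
  rw [Dop_eq_derivation, Derivation.coeFn_coe, ← smul_eq_C_mul, Derivation.map_smul,
    Derivation.leibniz_pow, ← Derivation.coeFn_coe, ← Dop_eq_derivation, Dop_linForm]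
  simp only [smul_eq_C_mul, nsmul_eq_mul, map_mul, map_natCast]
  ring

lemma exists_prod_map_Dop_C_mul_linForm_pow (L : List ℂ) (α c : ℂ) (n : ℕ) :
    ∃ c' m, (L.map Dop).prod (C c * linForm α ^ n) = C c' * linForm α ^ m := by
  induction L with
  | nil => exact ⟨c, n, by simp⟩
  | cons γ L ih =>
    obtain ⟨c', m, h⟩ := ih
    exact ⟨_, _, by rw [List.map_cons, List.prod_cons, Module.End.mul_apply, h,
      Dop_C_mul_linForm_pow]⟩

lemma prod_map_Dop_C_mul_linForm_pow_of_mem {L : List ℂ} {α : ℂ} (hα : α ∈ L) (c : ℂ) (n : ℕ) :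
    (L.map Dop).prod (C c * linForm α ^ n) = 0 := by
  obtain ⟨s, t, rfl⟩ := List.append_of_mem hα
  obtain ⟨c', m, h⟩ := exists_prod_map_Dop_C_mul_linForm_pow t α c n
  simp only [List.map_append, List.map_cons, List.prod_append, List.prod_cons,
    Module.End.mul_apply, h, Dop_C_mul_linForm_pow, sub_self, mul_zero, map_zero, zero_mul]

theorem apolarity_forward_general (d r : ℕ)
    (f : MvPolynomial (Fin 2) ℂ)
    (β : Fin r → ℂ) (lam : Fin r → ℂ)
    (hsum : f = ∑ k, C (lam k) * (linForm (β k)) ^ d) :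
    (List.ofFn fun ℓ : Fin r => Dop (β ℓ)).prod f = 0 := by
  rw [hsum, map_sum]
  refine Finset.sum_eq_zero fun k _ => ?_
  rw [← Function.comp_def Dop β, ← List.map_ofFn]
  exact prod_map_Dop_C_mul_linForm_pow_of_mem (List.mem_ofFn.mpr ⟨k, rfl⟩) _ _

/-- (Apolarity Lemma, forward direction.) If `f ∈ ℂ[x,y]_d` can be written as
`Σ_{k=1}^{r} λ_k (x+β_k y)^d` with `β_1, …, β_r` pairwise distinct and `1 ≤ r ≤ d+1`, then
`∏_{ℓ=1}^{r} (∂y − β_ℓ ∂x) ∘ f = 0`. -/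
theorem apolarity_forward (d r : ℕ) (hr : 1 ≤ r) (hrd : r ≤ d + 1)
    (f : MvPolynomial (Fin 2) ℂ) (hf : f.IsHomogeneous d)
    (β : Fin r → ℂ) (hβ : Function.Injective β) (lam : Fin r → ℂ)
    (hsum : f = ∑ k, C (lam k) * (linForm (β k)) ^ d) :
    (List.ofFn fun ℓ : Fin r => Dop (β ℓ)).prod f = 0 :=
  apolarity_forward_general d r f β lam hsum
end

section
/- (Apolarity Lemma, converse direction.) Let f ∈ ℂ[x,y]_d and let β_1, …, β_r ∈ ℂ be pairwise distinct with 1 ≤ r ≤ d+1. If ∏_{ℓ=1}^{r} (∂y − β_ℓ ∂x) ∘ f = 0, then there exist λ_1, …, λ_r ∈ ℂ such that f(x,y) = Σ_{k=1}^{r} λ_k (x+β_k y)^d. -/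
open MvPolynomial

/-!
Induction on `r`. Write `D = ∂y − b ∂x` for the last operator. By induction `D f` is a combination
of the `(x + β_k y)^(d-1)` with `β_k ≠ b`, and `D (x + a y)^d = d (a − b) (x + a y)^(d-1)`, so
subtracting a suitable combination of the `(x + β_k y)^d` from `f` leaves a form killed by `D`.
Such a form is a multiple of `(x + b y)^d`, by induction on the degree: Euler's identity turns
`∂y f = b ∂x f` into `d f = (x + b y) ∂x f`, and `∂x f` is again killed by `D`.
-/

namespace MvPolynomial

theorem pderiv_comm {R σ : Type*} [CommRing R] (i j : σ) (f : MvPolynomial σ R) :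
    pderiv i (pderiv j f) = pderiv j (pderiv i f) := by
  have h : ⁅pderiv i, pderiv j⁆ = (0 : Derivation R (MvPolynomial σ R) (MvPolynomial σ R)) :=
    derivation_ext fun k => by
      classical
      rw [Derivation.commutator_apply, pderiv_X, pderiv_X, Pi.single_apply, Pi.single_apply]
      split_ifs <;> simp
  have := congr($h f)
  rw [Derivation.commutator_apply] at this
  simpa [sub_eq_zero] using this

theorem IsHomogeneous.eq_C_coeff_zero {R σ : Type*} [CommSemiring R] {f : MvPolynomial σ R}
    (hf : f.IsHomogeneous 0) : f = C (coeff 0 f) :=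
  totalDegree_eq_zero_iff_eq_C.mp ((totalDegree_zero_iff_isHomogeneous σ).mpr hf)

end MvPolynomial

theorem Dop_apply (b : ℂ) (f : MvPolynomial (Fin 2) ℂ) :
    Dop b f = pderiv 1 f - C b * pderiv 0 f := by
  simp [Dop, smul_eq_C_mul]

theorem Dop_C (b c : ℂ) : Dop b (C c) = 0 := by
  simp [Dop_apply]

theorem Dop_pderiv_comm (b : ℂ) (i : Fin 2) (f : MvPolynomial (Fin 2) ℂ) :
    Dop b (pderiv i f) = pderiv i (Dop b f) := by
  simp [Dop_apply, pderiv_comm i]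

theorem MvPolynomial.IsHomogeneous.Dop {f : MvPolynomial (Fin 2) ℂ} {d : ℕ}
    (hf : f.IsHomogeneous d) (b : ℂ) : (Dop b f).IsHomogeneous (d - 1) := by
  rw [Dop_apply]
  exact hf.pderiv.sub (hf.pderiv.C_mul b)

theorem isHomogeneous_linForm_pow (a : ℂ) (d : ℕ) : (linForm a ^ d).IsHomogeneous d := by
  simpa [linForm] using ((isHomogeneous_X ℂ 0).add (isHomogeneous_C_mul_X a 1)).pow d

theorem Dop_linForm_pow_succ (a b : ℂ) (n : ℕ) :
    Dop b (linForm a ^ (n + 1)) = C ((n + 1) * (a - b)) * linForm a ^ n := by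
  have h0 : pderiv 0 (linForm a) = 1 := by simp [linForm]
  have h1 : pderiv 1 (linForm a) = C a := by simp [linForm]
  rw [Dop_apply, pderiv_pow, pderiv_pow, h0, h1, Nat.add_sub_cancel]
  simp only [map_mul, map_sub, map_add, map_natCast, map_one, Nat.cast_succ]
  ring

theorem Dop_sum_C_mul_linForm_pow_succ {ι : Type*} [Fintype ι] (d : ℕ) (a : ι → ℂ) (b : ℂ)
    (ha : ∀ k, a k ≠ b) (lam : ι → ℂ) :
    Dop b (∑ k, C (lam k / ((d + 1) * (a k - b))) * linForm (a k) ^ (d + 1)) =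
      ∑ k, C (lam k) * linForm (a k) ^ d := by
  refine (map_sum _ _ _).trans (Finset.sum_congr rfl fun k _ => ?_)
  rw [← smul_eq_C_mul, map_smul, Dop_linForm_pow_succ, smul_eq_C_mul, ← mul_assoc, ← map_mul,
    div_mul_cancel₀ _ (mul_ne_zero d.cast_add_one_ne_zero (sub_ne_zero.mpr (ha k)))]

theorem linForm_mul_pderiv_zero_of_Dop_eq_zero {f : MvPolynomial (Fin 2) ℂ} {n : ℕ}
    (hf : f.IsHomogeneous n) {b : ℂ} (hb : Dop b f = 0) : linForm b * pderiv 0 f = n • f := by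
  rw [← hf.sum_X_mul_pderiv, Fin.sum_univ_two, linForm,
    eq_of_sub_eq_zero ((Dop_apply b f).symm.trans hb)]
  ring

theorem exists_eq_C_mul_linForm_pow_of_Dop_eq_zero (b : ℂ) :
    ∀ (d : ℕ) (f : MvPolynomial (Fin 2) ℂ), f.IsHomogeneous d → Dop b f = 0 →
      ∃ c, f = C c * linForm b ^ d
  | 0, f, hf, _ => ⟨coeff 0 f, by rw [pow_zero, mul_one]; exact hf.eq_C_coeff_zero⟩
  | d + 1, f, hf, hb => by
    obtain ⟨c, hc⟩ := exists_eq_C_mul_linForm_pow_of_Dop_eq_zero b d (pderiv 0 f)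
      (by simpa using hf.pderiv) (by rw [Dop_pderiv_comm, hb, map_zero])
    have euler := linForm_mul_pderiv_zero_of_Dop_eq_zero hf hb
    rw [hc, ← Nat.cast_smul_eq_nsmul ℂ] at euler
    have hd : ((d + 1 : ℕ) : ℂ) ≠ 0 := Nat.cast_ne_zero.mpr d.succ_ne_zero
    refine ⟨c / (d + 1 : ℕ), smul_right_injective _ hd ?_⟩
    dsimp only
    rw [← euler, smul_eq_C_mul, ← mul_assoc (C _), ← map_mul, mul_div_cancel₀ _ hd]
    ring

theorem apolarity_converse_general (d r : ℕ)
    (f : MvPolynomial (Fin 2) ℂ) (hf : f.IsHomogeneous d)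
    (β : Fin r → ℂ) (hβ : Function.Injective β)
    (hann : (List.ofFn fun ℓ : Fin r => Dop (β ℓ)).prod f = 0) :
    ∃ lam : Fin r → ℂ, f = ∑ k, C (lam k) * (linForm (β k)) ^ d := by
  induction r generalizing d f with
  | zero => exact ⟨0, by simpa using hann⟩
  | succ r ih =>
    rw [List.ofFn_succ', List.prod_concat, Module.End.mul_apply] at hann
    set b := β (Fin.last r)
    obtain ⟨μ, hμ⟩ : ∃ μ : Fin r → ℂ,
        Dop b (f - ∑ k, C (μ k) * linForm (β k.castSucc) ^ d) = 0 := by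
      cases d with
      | zero => exact ⟨0, by rw [hf.eq_C_coeff_zero]; simp [Dop_C]⟩
      | succ d =>
        obtain ⟨lam, hlam⟩ := ih d (Dop b f) (by simpa using hf.Dop b) (fun k => β k.castSucc)
          (hβ.comp (Fin.castSucc_injective r)) hann
        have hb : ∀ k : Fin r, β k.castSucc ≠ b := fun k h => (Fin.castSucc_lt_last k).ne (hβ h)
        exact ⟨_, by rw [map_sub, Dop_sum_C_mul_linForm_pow_succ d _ b hb lam, ← hlam, sub_self]⟩
    obtain ⟨c, hc⟩ := exists_eq_C_mul_linForm_pow_of_Dop_eq_zero b d _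
      (hf.sub (.sum _ _ _ fun k _ => (isHomogeneous_linForm_pow _ d).C_mul _)) hμ
    refine ⟨Fin.snoc μ c, ?_⟩
    rw [Fin.sum_univ_castSucc]
    simp only [Fin.snoc_castSucc, Fin.snoc_last]
    rw [← hc]
    ring

/-- (Apolarity Lemma, converse direction.) Let `f ∈ ℂ[x,y]_d` and let `β_1, …, β_r ∈ ℂ` be
pairwise distinct with `1 ≤ r ≤ d+1`. If `∏_{ℓ=1}^{r} (∂y − β_ℓ ∂x) ∘ f = 0`, then there
exist `λ_1, …, λ_r ∈ ℂ` such that `f = Σ_{k=1}^{r} λ_k (x+β_k y)^d`. -/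
theorem apolarity_converse (d r : ℕ) (hr : 1 ≤ r) (hrd : r ≤ d + 1)
    (f : MvPolynomial (Fin 2) ℂ) (hf : f.IsHomogeneous d)
    (β : Fin r → ℂ) (hβ : Function.Injective β)
    (hann : (List.ofFn fun ℓ : Fin r => Dop (β ℓ)).prod f = 0) :
    ∃ lam : Fin r → ℂ, f = ∑ k, C (lam k) * (linForm (β k)) ^ d :=
  apolarity_converse_general d r f hf β hβ hann
end

section
/- For every d ≥ 2, the Waring rank of the binary form f(x,y) = x·y^{d−1} is exactly d. -/
/-!
Upper bound: for a primitive `d`-th root of unity `ζ`,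
`d² · x y^(d-1) = ∑_{j<d} ζ^j (x + ζ^j y)^d`, because averaging against `ζ^j` kills every
monomial `x^(d-m) y^m` except the one with `d ∣ m + 1`.

Lower bound: the derivation `b ∂ₓ - a ∂ᵧ` maps `(a'x + b'y)^m` to
`m (b a' - a b') (a'x + b'y)^(m-1)`, so it annihilates `(ax + by)^m`, and it maps `y^m` to
`-a m y^(m-1)`. Applying `∂ₓ` to `x y^(d-1) = ∑ λ_k L_k^d` writes `y^(d-1)` as a combination
of the `L_k^(d-1)` with `L_k` not a multiple of `y`. Removing these terms one at a time with
the derivations above, fewer than `d` of them would leave a nonzero multiple of a power of `y`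
equal to the empty sum.
-/

open MvPolynomial Finset

noncomputable section

namespace BinaryForm

variable {R : Type*} [CommRing R]

def linear (a b : R) : MvPolynomial (Fin 2) R := C a * X 0 + C b * X 1

lemma isHomogeneous_linear (a b : R) : (linear a b).IsHomogeneous 1 :=
  ((isHomogeneous_X R 0).C_mul a).add ((isHomogeneous_X R 1).C_mul b)

lemma exists_eq_linear_of_isHomogeneous_one {L : MvPolynomial (Fin 2) R}
    (hL : L.IsHomogeneous 1) : ∃ a b, L = linear a b := by
  rw [← mem_homogeneousSubmodule, homogeneousSubmodule_one_eq_span_X,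
    Submodule.mem_span_range_iff_exists_fun] at hL
  obtain ⟨c, rfl⟩ := hL
  exact ⟨c 0, c 1, by simp [linear, Fin.sum_univ_two, smul_eq_C_mul]⟩

lemma linear_zero_one : linear (0 : R) 1 = X 1 := by simp [linear]

def annihilator (a b : R) : Derivation R (MvPolynomial (Fin 2) R) (MvPolynomial (Fin 2) R) :=
  b • pderiv 0 - a • pderiv 1

lemma annihilator_linear (a b a' b' : R) :
    annihilator a b (linear a' b') = C (b * a' - a * b') := by
  simp [annihilator, linear, pderiv_X, smul_eq_C_mul]

lemma annihilator_C_mul_linear_pow (a b a' b' c : R) (n : ℕ) :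
    annihilator a b (C c * linear a' b' ^ (n + 1)) =
      C (c * (n + 1) * (b * a' - a * b')) * linear a' b' ^ n := by
  rw [Derivation.leibniz, Derivation.leibniz_pow, annihilator_linear]
  simp [annihilator, nsmul_eq_mul]
  ring

lemma annihilator_C_mul_X_one_pow (a b c : R) (n : ℕ) :
    annihilator a b (C c * X 1 ^ (n + 1)) = C (-(c * (n + 1) * a)) * X 1 ^ n := by
  simpa [← linear_zero_one] using annihilator_C_mul_linear_pow a b 0 1 c n

section

variable [IsDomain R] [CharZero R]

theorem C_mul_X_one_pow_ne_sum_linear_pow {ι : Type*} (s : Finset ι) (a b c : ι → R)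
    (ha : ∀ k ∈ s, a k ≠ 0) {γ : R} (hγ : γ ≠ 0) {m : ℕ} (hm : #s ≤ m) :
    C γ * X 1 ^ m ≠ ∑ k ∈ s, C (c k) * linear (a k) (b k) ^ m := by
  classical
  induction s using Finset.induction_on generalizing m γ c with
  | empty => simpa using hγ
  | insert k₀ s hk₀ ih =>
    obtain ⟨n, rfl⟩ : ∃ n, m = n + 1 :=
      Nat.exists_eq_add_one.2 (by grind [card_insert_of_notMem])
    intro h
    have h' := congrArg (annihilator (a k₀) (b k₀)) h
    rw [annihilator_C_mul_X_one_pow, map_sum, sum_insert hk₀, annihilator_C_mul_linear_pow,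
      mul_comm (b k₀), sub_self, mul_zero, map_zero, zero_mul, zero_add] at h'
    simp_rw [annihilator_C_mul_linear_pow] at h'
    refine ih _ (fun k hk => ha k (mem_insert_of_mem hk)) ?_ ?_ h'
    · exact neg_ne_zero.2 <| mul_ne_zero (mul_ne_zero hγ (Nat.cast_add_one_ne_zero n))
        (ha k₀ (mem_insert_self _ _))
    · grind [card_insert_of_notMem]

theorem card_le_of_X_zero_mul_X_one_pow_eq_sum {ι : Type*} [Fintype ι] (lam : ι → R)
    (L : ι → MvPolynomial (Fin 2) R) (hL : ∀ k, (L k).IsHomogeneous 1) {n : ℕ}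
    (h : X 0 * X 1 ^ n = ∑ k, C (lam k) * L k ^ (n + 1)) : n + 1 ≤ Fintype.card ι := by
  classical
  choose a b hab using fun k => exists_eq_linear_of_isHomogeneous_one (hL k)
  have hx : annihilator (0 : R) 1 (X 0 * X 1 ^ n) = C 1 * X 1 ^ n := by simp [annihilator]
  have h' := congrArg (annihilator 0 1) h
  simp_rw [hx, hab, map_sum, annihilator_C_mul_linear_pow, one_mul, zero_mul, sub_zero] at h'
  by_contra! hcard
  refine C_mul_X_one_pow_ne_sum_linear_pow {k | a k ≠ 0} a b (fun k => lam k * (n + 1) * a k)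
    (fun k hk => (mem_filter.1 hk).2) one_ne_zero
    ((card_filter_le _ _).trans (Nat.le_of_lt_succ hcard)) ?_
  rwa [sum_filter_of_ne fun k _ hk => by simp_all]

end

variable {K : Type*} [Field K] {ζ : K} {d : ℕ}

lemma geom_sum_pow_add_one (hζ : IsPrimitiveRoot ζ d) (hd : 2 ≤ d) {m : ℕ} (hm : m ≤ d) :
    ∑ j ∈ range d, (ζ ^ (m + 1)) ^ j = if m + 1 = d then (d : K) else 0 := by
  split_ifs with h
  · simp [h, hζ.pow_eq_one]
  · have hne : ζ ^ (m + 1) ≠ 1 := fun h1 =>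
      h (Nat.eq_of_dvd_of_lt_two_mul m.succ_ne_zero ((hζ.pow_eq_one_iff_dvd _).1 h1) (by omega))
    rw [geom_sum_eq hne, ← pow_mul, mul_comm, pow_mul, hζ.pow_eq_one, one_pow, sub_self,
      zero_div]

theorem X_zero_mul_X_one_pow_eq_sum (hζ : IsPrimitiveRoot ζ d) (hd : 2 ≤ d) :
    X 0 * X 1 ^ (d - 1) = ∑ j ∈ range d, C (ζ ^ j / d ^ 2) * linear 1 (ζ ^ j) ^ d := by
  have : NeZero d := ⟨by omega⟩
  have hd0 : (d : K) ≠ 0 := hζ.neZero'.out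
  calc (X 0 * X 1 ^ (d - 1) : MvPolynomial (Fin 2) K)
      = ∑ m ∈ range (d + 1), C ((∑ j ∈ range d, (ζ ^ (m + 1)) ^ j) * d.choose m / d ^ 2) *
          (X 1 ^ m * X 0 ^ (d - m)) := by
        rw [sum_eq_single (d - 1)]
        · rw [geom_sum_pow_add_one hζ hd (by omega), if_pos (by omega),
            Nat.choose_symm (by omega), Nat.choose_one_right, Nat.sub_sub_self (by omega),
            pow_one, mul_comm (X 0), ← sq, div_self (pow_ne_zero 2 hd0), map_one, one_mul]
        · intro m hm hm'
          rw [geom_sum_pow_add_one hζ hd (Nat.lt_succ_iff.1 (mem_range.1 hm)), if_neg (by omega),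
            zero_mul, zero_div, map_zero, zero_mul]
        · simp
    _ = ∑ j ∈ range d, ∑ m ∈ range (d + 1),
          C (ζ ^ j / d ^ 2) *
            ((C (ζ ^ j) * X 1) ^ m * X 0 ^ (d - m) * (d.choose m : MvPolynomial (Fin 2) K)) := by
        simp_rw [sum_mul, sum_div, map_sum, sum_mul]
        rw [sum_comm]
        refine sum_congr rfl fun m _ => sum_congr rfl fun j _ => ?_
        rw [div_eq_mul_inv, div_eq_mul_inv]
        simp only [map_mul, map_pow, map_natCast, mul_pow]
        ring
    _ = ∑ j ∈ range d, C (ζ ^ j / d ^ 2) * linear 1 (ζ ^ j) ^ d := by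
        simp_rw [linear, map_one, one_mul, add_comm (X 0 : MvPolynomial (Fin 2) K), add_pow,
          mul_sum]

end BinaryForm

end

/-- For every `d ≥ 2`, the Waring rank of the binary form `f(x,y) = x·y^{d−1}` is exactly `d`:
`d` is the least `r` for which `f` admits a decomposition `f = Σ_{k=1}^{r} λ_k L_k^d` with
nonzero `λ_k` and linear forms `L_k`. -/
theorem waringRank_x_mul_y_pow (d : ℕ) (hd : 2 ≤ d) :
    IsLeast {r : ℕ | ∃ (lam : Fin r → ℂ) (L : Fin r → MvPolynomial (Fin 2) ℂ),
      (∀ k, lam k ≠ 0) ∧ (∀ k, (L k).IsHomogeneous 1) ∧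
      (X 0 * X 1 ^ (d - 1) : MvPolynomial (Fin 2) ℂ) = ∑ k, C (lam k) * (L k) ^ d} d := by
  refine ⟨?_, fun r ⟨lam, L, _, hL, h⟩ => ?_⟩
  · obtain ⟨ζ, hζ⟩ : ∃ ζ : ℂ, IsPrimitiveRoot ζ d :=
      ⟨_, Complex.isPrimitiveRoot_exp d (by omega)⟩
    refine ⟨fun j => ζ ^ (j : ℕ) / d ^ 2, fun j => BinaryForm.linear 1 (ζ ^ (j : ℕ)),
      fun j => div_ne_zero (pow_ne_zero _ (hζ.ne_zero (by omega)))
        (pow_ne_zero _ (Nat.cast_ne_zero.2 (by omega))),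
      fun j => BinaryForm.isHomogeneous_linear _ _, ?_⟩
    exact (BinaryForm.X_zero_mul_X_one_pow_eq_sum hζ hd).trans (Fin.sum_univ_eq_sum_range _ d).symm
  · obtain ⟨n, rfl⟩ : ∃ n, d = n + 1 := ⟨d - 1, by omega⟩
    rw [Nat.add_sub_cancel] at h
    simpa using BinaryForm.card_le_of_X_zero_mul_X_one_pow_eq_sum lam L hL h
end

section
/- Let f(x,y) = Σ_{i=0}^{d} C(d,i) a_i x^{d−i} y^i be a binary form of degree d, and let β_1, …, β_r ∈ ℂ be pairwise distinct with 1 ≤ r ≤ d. Suppose there exist λ_1, …, λ_r ∈ ℂ∖{0} such that f(x,y) = Σ_{k=1}^{r} λ_k (x+β_k y)^d. Then: (a) there exist c_0, c_1, …, c_{r−1} ∈ ℂ such that a_i = −(c_0 a_{i−r} + c_1 a_{i−r+1} + ⋯ + c_{r−1} a_{i−1}) for all i = r, r+1, …, d, and, defining a_i for i > d inductively by the same recurrence, (b) the r×r Hankel matrix A_0 = (a_{i+j})_{0≤i,j≤r−1} is invertible, and (c) the characteristic polynomial of A_0^{−1}A_1, where A_1 = (a_{i+j+1})_{0≤i,j≤r−1},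 equals ∏_{k=1}^{r}(X − β_k); that is, the eigenvalues of A_0^{−1}A_1 are exactly β_1, …, β_r. -/
open MvPolynomial Matrix

open Polynomial in
lemma charpoly_conj_aux {n : Type*} [Fintype n] [DecidableEq n]
    (P N : Matrix n n ℂ) (hP : IsUnit P.det) :
    (P⁻¹ * N * P).charpoly = N.charpoly := by
  set Pc : Matrix n n ℂ[X] := P.map Polynomial.C with hPcdef
  have hPc : IsUnit Pc.det := by
    rw [hPcdef, ← RingHom.mapMatrix_apply, ← RingHom.map_det]
    exact hP.map (Polynomial.C : ℂ →+* ℂ[X])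
  have hmapinv : (P⁻¹).map Polynomial.C = Pc⁻¹ := by
    refine (Matrix.inv_eq_right_inv ?_).symm
    rw [hPcdef, ← Matrix.map_mul, Matrix.mul_nonsing_inv P hP]
    simp
  have key : Matrix.charmatrix (P⁻¹ * N * P) = Pc⁻¹ * Matrix.charmatrix N * Pc := by
    rw [Matrix.charmatrix, Matrix.charmatrix, RingHom.mapMatrix_apply, RingHom.mapMatrix_apply,
      Matrix.map_mul, Matrix.map_mul, hmapinv]
    rw [Matrix.mul_sub, Matrix.sub_mul]
    congr 1
    symm
    have hc : Commute (Matrix.scalar n (X : ℂ[X])) Pc⁻¹ :=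
      Matrix.scalar_commute _ (fun r' => Commute.all _ _) _
    calc Pc⁻¹ * Matrix.scalar n (X : ℂ[X]) * Pc
        = Matrix.scalar n (X : ℂ[X]) * (Pc⁻¹ * Pc) := by
          rw [← hc.eq, Matrix.mul_assoc]
      _ = Matrix.scalar n (X : ℂ[X]) := by
          rw [Matrix.nonsing_inv_mul _ hPc, Matrix.mul_one]
  have hPP : Pc⁻¹.det * Pc.det = 1 := by
    rw [← Matrix.det_mul, Matrix.nonsing_inv_mul _ hPc, Matrix.det_one]
  rw [Matrix.charpoly, Matrix.charpoly, key, Matrix.det_mul, Matrix.det_mul]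
  calc Pc⁻¹.det * (Matrix.charmatrix N).det * Pc.det
      = Pc⁻¹.det * Pc.det * (Matrix.charmatrix N).det := by ring
    _ = (Matrix.charmatrix N).det := by rw [hPP, one_mul]

/-- Suppose the binary form `f = Σ_{i=0}^{d} C(d,i) a_i x^{d−i} y^i` satisfies
`f = Σ_{k=1}^{r} λ_k (x+β_k y)^d` with `λ_k ≠ 0`, `β_1, …, β_r` pairwise distinct, `1 ≤ r ≤ d`.
Then there exist `c_0, …, c_{r−1}` and an extension `A` of the sequence `a_0, …, a_d` such that
`A_i = −(c_0 A_{i−r} + ⋯ + c_{r−1} A_{i−1})` for all `i ≥ r`, the `r×r` Hankel matrix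
`A_0 = (A_{i+j})` is invertible, and the characteristic polynomial of `A_0⁻¹ A_1`
(where `A_1 = (A_{i+j+1})`) is `∏_{k=1}^{r} (X − β_k)`, i.e. the eigenvalues of `A_0⁻¹ A_1`
are exactly `β_1, …, β_r`. -/
theorem hankel_conditions_of_waring_decomposition (d r : ℕ) (hr : 1 ≤ r) (hrd : r ≤ d)
    (a : ℕ → ℂ) (β : Fin r → ℂ) (hβ : Function.Injective β)
    (lam : Fin r → ℂ) (hlam : ∀ k, lam k ≠ 0)
    (hsum : (∑ i ∈ Finset.range (d + 1),
        C ((d.choose i : ℂ) * a i) * X 0 ^ (d - i) * X 1 ^ i)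
      = ∑ k, C (lam k) * (linForm (β k)) ^ d) :
    ∃ (c : Fin r → ℂ) (A : ℕ → ℂ),
      (∀ i ≤ d, A i = a i) ∧
      (∀ i, r ≤ i → A i = -(∑ j : Fin r, c j * A (i - r + (j : ℕ)))) ∧
      IsUnit (Matrix.of fun i j : Fin r => A ((i : ℕ) + (j : ℕ))) ∧
      Matrix.charpoly ((Matrix.of fun i j : Fin r => A ((i : ℕ) + (j : ℕ)))⁻¹ *
          (Matrix.of fun i j : Fin r => A ((i : ℕ) + (j : ℕ) + 1)))
        = ∏ k : Fin r, (Polynomial.X - Polynomial.C (β k)) := by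
  classical
  -- Step 1: the coefficients satisfy `a i = ∑ k, lam k * β k ^ i` for `i ≤ d`.
  have ha : ∀ i ≤ d, a i = ∑ k, lam k * β k ^ i := by
    intro i hi
    have h1 := congrArg (MvPolynomial.aeval (![1, Polynomial.X] : Fin 2 → Polynomial ℂ)) hsum
    simp only [map_sum, _root_.map_mul, map_pow, MvPolynomial.aeval_C, MvPolynomial.aeval_X,
      linForm, _root_.map_add, Matrix.cons_val_zero, Matrix.cons_val_one, Matrix.head_cons,
      one_pow, mul_one, Polynomial.algebraMap_eq] at h1
    have h2 := congrArg (fun q : Polynomial ℂ => q.coeff i) h1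
    simp only [Polynomial.finset_sum_coeff, mul_assoc, Polynomial.coeff_natCast_mul,
      Polynomial.coeff_C_mul, Polynomial.coeff_X_pow, mul_ite, mul_one, mul_zero,
      Finset.sum_ite_eq, Finset.mem_range] at h2
    rw [if_pos (Nat.lt_succ_of_le hi)] at h2
    have hbin : ∀ b : ℂ, ((1 + Polynomial.C b * Polynomial.X) ^ d).coeff i
        = (d.choose i : ℂ) * b ^ i := by
      intro b
      rw [add_comm, add_pow]
      simp only [Polynomial.finset_sum_coeff, one_pow, mul_one, mul_pow, ← Polynomial.C_pow,
        Polynomial.coeff_mul_natCast, Polynomial.coeff_C_mul, Polynomial.coeff_X_pow,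
        ite_mul, mul_ite, mul_one, mul_zero, zero_mul, Finset.sum_ite_eq, Finset.mem_range]
      rw [if_pos (Nat.lt_succ_of_le hi)]
      ring
    simp only [hbin] at h2
    have hch : (d.choose i : ℂ) ≠ 0 :=
      Nat.cast_ne_zero.mpr (Nat.choose_pos hi).ne'
    apply mul_left_cancel₀ hch
    rw [h2, Finset.mul_sum]
    exact Finset.sum_congr rfl fun k _ => by ring
  -- The extension of the sequence
  set A : ℕ → ℂ := fun i => ∑ k, lam k * β k ^ i with hA
  -- The polynomial with roots β and its coefficients
  set p : Polynomial ℂ := ∏ k : Fin r, (Polynomial.X - Polynomial.C (β k)) with hp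
  have hpm : p.Monic := Polynomial.monic_prod_of_monic _ _ fun k _ => Polynomial.monic_X_sub_C _
  have hpdeg : p.natDegree = r := by
    rw [hp, Polynomial.natDegree_prod _ _ fun k _ => Polynomial.X_sub_C_ne_zero _]
    simp
  have hroot : ∀ k, β k ^ r = -(∑ j : Fin r, p.coeff (j : ℕ) * β k ^ (j : ℕ)) := by
    intro k
    have h0 : p.eval (β k) = 0 := by
      rw [hp, Polynomial.eval_prod]
      exact Finset.prod_eq_zero (Finset.mem_univ k) (by simp)
    rw [Polynomial.eval_eq_sum_range, hpdeg, Finset.sum_range_succ] at h0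
    have hcr : p.coeff r = 1 := by
      have := hpm.coeff_natDegree
      rwa [hpdeg] at this
    rw [hcr, one_mul] at h0
    have h3 : β k ^ r = -(∑ j ∈ Finset.range r, p.coeff j * β k ^ j) :=
      eq_neg_of_add_eq_zero_left (by linear_combination h0)
    rw [h3, Finset.sum_range fun j => p.coeff j * β k ^ j]
  -- The recurrence
  have hrec : ∀ i, r ≤ i → A i = -(∑ j : Fin r, p.coeff (j : ℕ) * A (i - r + (j : ℕ))) := by
    intro i hi
    have LHS' : A i = ∑ k, ∑ j : Fin r,
        -(p.coeff (j : ℕ) * (lam k * β k ^ (i - r + (j : ℕ)))) := by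
      rw [hA]
      refine Finset.sum_congr rfl fun k _ => ?_
      have e1 : β k ^ i = β k ^ (i - r) * β k ^ r := by
        rw [← pow_add, Nat.sub_add_cancel hi]
      rw [e1, hroot k, mul_neg, mul_neg, Finset.mul_sum, Finset.mul_sum, ← Finset.sum_neg_distrib]
      refine Finset.sum_congr rfl fun j _ => ?_
      rw [pow_add]
      ring
    rw [LHS', Finset.sum_comm]
    rw [← Finset.sum_neg_distrib]
    refine Finset.sum_congr rfl fun j _ => ?_
    rw [hA, Finset.mul_sum, ← Finset.sum_neg_distrib]
  -- Matrices
  set V : Matrix (Fin r) (Fin r) ℂ := Matrix.vandermonde β with hV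
  have hVdet : IsUnit V.det :=
    isUnit_iff_ne_zero.mpr (Matrix.det_vandermonde_ne_zero_iff.mpr hβ)
  have hVTdet : IsUnit (Vᵀ).det := by rwa [Matrix.det_transpose]
  set D : Matrix (Fin r) (Fin r) ℂ := Matrix.diagonal lam with hD
  set B : Matrix (Fin r) (Fin r) ℂ := Matrix.diagonal β with hB
  have hDdet : IsUnit D.det := by
    rw [hD, Matrix.det_diagonal]
    exact isUnit_iff_ne_zero.mpr (Finset.prod_ne_zero_iff.mpr fun k _ => hlam k)
  have hVD : Vᵀ * D = Matrix.of fun i k : Fin r => β k ^ (i : ℕ) * lam k := by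
    ext i k
    simp [Matrix.mul_diagonal, Matrix.transpose_apply, Matrix.vandermonde_apply, hV, hD]
  have hA0 : (Matrix.of fun i j : Fin r => A ((i : ℕ) + (j : ℕ))) = Vᵀ * D * V := by
    ext i j
    rw [hVD]
    simp only [Matrix.of_apply, Matrix.mul_apply, Matrix.vandermonde_apply, hA, hV]
    refine Finset.sum_congr rfl fun k _ => ?_
    rw [pow_add]
    ring
  have hVDB : Vᵀ * (D * B) = Matrix.of fun i k : Fin r => β k ^ (i : ℕ) * (lam k * β k) := by
    ext i k
    rw [hD, hB, Matrix.diagonal_mul_diagonal]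
    simp [Matrix.mul_diagonal, Matrix.transpose_apply, Matrix.vandermonde_apply, hV]
  have hA1 : (Matrix.of fun i j : Fin r => A ((i : ℕ) + (j : ℕ) + 1)) = Vᵀ * (D * B) * V := by
    ext i j
    rw [hVDB]
    simp only [Matrix.of_apply, Matrix.mul_apply, Matrix.vandermonde_apply, hA, hV]
    refine Finset.sum_congr rfl fun k _ => ?_
    rw [pow_add, pow_succ]
    ring
  have hA0unit : IsUnit (Matrix.of fun i j : Fin r => A ((i : ℕ) + (j : ℕ))) := by
    rw [hA0, Matrix.isUnit_iff_isUnit_det, Matrix.det_mul, Matrix.det_mul]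
    exact (hVTdet.mul hDdet).mul hVdet
  have hprod : (Vᵀ * D * V)⁻¹ * (Vᵀ * (D * B) * V) = V⁻¹ * B * V := by
    have h1 : (Vᵀ)⁻¹ * (Vᵀ * (D * (B * V))) = D * (B * V) := by
      rw [← Matrix.mul_assoc, Matrix.nonsing_inv_mul _ hVTdet, Matrix.one_mul]
    calc (Vᵀ * D * V)⁻¹ * (Vᵀ * (D * B) * V)
        = V⁻¹ * (D⁻¹ * ((Vᵀ)⁻¹ * (Vᵀ * (D * (B * V))))) := by
          rw [Matrix.mul_inv_rev, Matrix.mul_inv_rev]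
          simp only [Matrix.mul_assoc]
      _ = V⁻¹ * (D⁻¹ * (D * (B * V))) := by rw [h1]
      _ = V⁻¹ * (B * V) := by
          rw [← Matrix.mul_assoc D⁻¹, Matrix.nonsing_inv_mul _ hDdet, Matrix.one_mul]
      _ = V⁻¹ * B * V := by rw [Matrix.mul_assoc]
  have hBcp : B.charpoly = ∏ k : Fin r, (Polynomial.X - Polynomial.C (β k)) := by
    rw [Matrix.charpoly_of_upperTriangular _ (Matrix.blockTriangular_diagonal β)]
    simp [hB]
  refine ⟨fun j => p.coeff (j : ℕ), A, fun i hi => (ha i hi).symm, hrec, hA0unit, ?_⟩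
  rw [hA0, hA1, hprod, charpoly_conj_aux V B hVdet, hBcp]
end

section
/- Let f(x,y) = Σ_{i=0}^{d} C(d,i) a_i x^{d−i} y^i be a binary form of degree d, and let β_1, …, β_r ∈ ℂ be pairwise distinct with 1 ≤ r ≤ d. Suppose there exist c_0, c_1, …, c_{r−1} ∈ ℂ such that a_i = −(c_0 a_{i−r} + c_1 a_{i−r+1} + ⋯ + c_{r−1} a_{i−1}) for all i = r, r+1, …, d, and, defining a_i for i > d inductively by this recurrence, the r×r Hankel matrix A_0 = (a_{i+j})_{0≤i,j≤r−1} is invertible and the eigenvalues of A_0^{−1}A_1 (where A_1 = (a_{i+j+1})_{0≤i,j≤r−1}) are β_1, …, β_r, i.e. the characteristic polynomial of A_0^{−1}A_1 equals ∏_{k=1}^{r}(X − β_k). Then there exist λ_1, …, λ_r ∈ ℂ∖{0} such that f(x,y) = Σ_{k=1}^{r} λ_k (x+β_k y)^d. -/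
open MvPolynomial

/-- Companion matrix of `t^r + c_{r-1} t^{r-1} + ... + c_0`. -/
noncomputable def myComp (r : ℕ) (c : Fin r → ℂ) : Matrix (Fin r) (Fin r) ℂ :=
  Matrix.of fun i j => if (j : ℕ) + 1 = r then -c i else if (i : ℕ) = (j : ℕ) + 1 then 1 else 0

open Matrix Polynomial in
lemma myEvalCharpoly {r : ℕ} (M : Matrix (Fin r) (Fin r) ℂ) (x : ℂ) :
    M.charpoly.eval x = (x • (1 : Matrix (Fin r) (Fin r) ℂ) - M).det := by
  rw [Matrix.charpoly, ← Polynomial.coe_evalRingHom, RingHom.map_det]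
  congr 1
  ext i j
  by_cases h : i = j <;>
    simp [h, charmatrix_apply, Matrix.diagonal_apply, Matrix.one_apply]

open Matrix in
lemma myCompRoot {r : ℕ} (hr : 1 ≤ r) (c : Fin r → ℂ) (β : ℂ)
    (h : (β • (1 : Matrix (Fin r) (Fin r) ℂ) - myComp r c).det = 0) :
    β ^ r + ∑ j : Fin r, c j * β ^ (j : ℕ) = 0 := by
  obtain ⟨v, hv0, hv⟩ := Matrix.exists_vecMul_eq_zero_iff.mpr h
  have h0r : 0 < r := hr
  have key : ∀ j : Fin r, (∑ i, v i * myComp r c i j) = β * v j := by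
    intro j
    have h2 := congrFun hv j
    simp only [Matrix.vecMul, dotProduct, Matrix.sub_apply, Matrix.smul_apply,
      Matrix.one_apply, smul_eq_mul, mul_sub, mul_ite, mul_one, mul_zero,
      Finset.sum_sub_distrib, Finset.sum_ite_eq', Finset.mem_univ, if_pos,
      Pi.zero_apply] at h2
    linear_combination -h2
  have pows : ∀ n (hn : n < r), v ⟨n, hn⟩ = β ^ n * v ⟨0, h0r⟩ := by
    intro n
    induction n with
    | zero => intro hn; simp
    | succ m ih =>
      intro hn
      have hm : m < r := Nat.lt_of_succ_lt hn
      have hk := key ⟨m, hm⟩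
      rw [show (∑ i, v i * myComp r c i ⟨m, hm⟩) = v ⟨m + 1, hn⟩ from ?_] at hk
      · rw [hk, ih hm, pow_succ']; ring
      · rw [Finset.sum_eq_single (⟨m + 1, hn⟩ : Fin r)]
        · simp only [myComp, Matrix.of_apply]
          rw [if_neg (by omega)]
          simp
        · intro b _ hb
          simp only [myComp, Matrix.of_apply]
          rw [if_neg (by omega), if_neg (by simpa [Fin.ext_iff] using hb), mul_zero]
        · simp
  have hv00 : v ⟨0, h0r⟩ ≠ 0 := by
    intro h0
    apply hv0
    funext j
    have := pows j j.isLt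
    simpa [h0] using this
  have hlast := key ⟨r - 1, by omega⟩
  have hcol : (∑ i, v i * myComp r c i ⟨r - 1, by omega⟩)
      = -∑ i : Fin r, c i * (β ^ (i : ℕ) * v ⟨0, h0r⟩) := by
    rw [← Finset.sum_neg_distrib]
    refine Finset.sum_congr rfl fun i _ => ?_
    rw [show v i = β ^ (i : ℕ) * v ⟨0, h0r⟩ from by simpa [Fin.eta] using pows i i.isLt]
    simp only [myComp, Matrix.of_apply, if_pos (by omega : (r - 1 : ℕ) + 1 = r)]
    ring
  rw [hcol] at hlast
  have hvlast : v ⟨r - 1, by omega⟩ = β ^ (r - 1) * v ⟨0, h0r⟩ := pows (r - 1) (by omega)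
  rw [hvlast] at hlast
  have hzero : (β ^ r + ∑ j : Fin r, c j * β ^ (j : ℕ)) * v ⟨0, h0r⟩ = 0 := by
    have hpow : β * β ^ (r - 1) = β ^ r := by
      rw [← pow_succ']; congr 1; omega
    have hs : (∑ j : Fin r, c j * β ^ (j : ℕ)) * v ⟨0, h0r⟩
        = ∑ i : Fin r, c i * (β ^ (i : ℕ) * v ⟨0, h0r⟩) := by
      rw [Finset.sum_mul]; exact Finset.sum_congr rfl fun i _ => by ring
    rw [add_mul, hs, ← hpow]
    linear_combination -hlast
  exact (mul_eq_zero.mp hzero).resolve_right hv00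

/-- Let `f = Σ_{i=0}^{d} C(d,i) a_i x^{d−i} y^i` and let `β_1, …, β_r` be pairwise distinct,
`1 ≤ r ≤ d`. Suppose there are `c_0, …, c_{r−1}` and an extension `A` of `a_0, …, a_d`
satisfying the recurrence `A_i = −(c_0 A_{i−r} + ⋯ + c_{r−1} A_{i−1})` for all `i ≥ r`
(this encodes the recurrence for `r ≤ i ≤ d` together with the inductive definition of `A_i`
for `i > d`), such that the `r×r` Hankel matrix `A_0 = (A_{i+j})` is invertible and the
characteristic polynomial of `A_0⁻¹ A_1` (with `A_1 = (A_{i+j+1})`) is `∏_{k=1}^{r}(X − β_k)`,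
i.e. its eigenvalues are `β_1, …, β_r`. Then there exist nonzero `λ_1, …, λ_r` with
`f = Σ_{k=1}^{r} λ_k (x+β_k y)^d`. -/
theorem waring_decomposition_of_hankel_conditions (d r : ℕ) (hr : 1 ≤ r) (hrd : r ≤ d)
    (a : ℕ → ℂ) (β : Fin r → ℂ) (hβ : Function.Injective β)
    (c : Fin r → ℂ) (A : ℕ → ℂ)
    (hAa : ∀ i ≤ d, A i = a i)
    (hrec : ∀ i, r ≤ i → A i = -(∑ j : Fin r, c j * A (i - r + (j : ℕ))))
    (hunit : IsUnit (Matrix.of fun i j : Fin r => A ((i : ℕ) + (j : ℕ))))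
    (hchar : Matrix.charpoly ((Matrix.of fun i j : Fin r => A ((i : ℕ) + (j : ℕ)))⁻¹ *
          (Matrix.of fun i j : Fin r => A ((i : ℕ) + (j : ℕ) + 1)))
        = ∏ k : Fin r, (Polynomial.X - Polynomial.C (β k))) :
    ∃ lam : Fin r → ℂ, (∀ k, lam k ≠ 0) ∧
      (∑ i ∈ Finset.range (d + 1),
          C ((d.choose i : ℂ) * a i) * X 0 ^ (d - i) * X 1 ^ i)
        = ∑ k, C (lam k) * (linForm (β k)) ^ d := by
  classical
  set A0 : Matrix (Fin r) (Fin r) ℂ :=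
    Matrix.of fun i j : Fin r => A ((i : ℕ) + (j : ℕ)) with hA0def
  set A1 : Matrix (Fin r) (Fin r) ℂ :=
    Matrix.of fun i j : Fin r => A ((i : ℕ) + (j : ℕ) + 1) with hA1def
  have hdet : IsUnit A0.det := (Matrix.isUnit_iff_isUnit_det _).mp hunit
  -- A0 * companion = A1
  have h1 : A0 * myComp r c = A1 := by
    ext i j
    rw [Matrix.mul_apply]
    by_cases hj : (j : ℕ) + 1 = r
    · have hij : (i : ℕ) + (j : ℕ) + 1 = (i : ℕ) + r := by omega
      have : A1 i j = -(∑ k : Fin r, c k * A ((i : ℕ) + (k : ℕ))) := by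
        show A ((i : ℕ) + (j : ℕ) + 1) = _
        rw [hij, hrec ((i : ℕ) + r) le_add_self]
        congr 1
        refine Finset.sum_congr rfl fun k _ => ?_
        congr 2
        omega
      rw [this, ← Finset.sum_neg_distrib]
      refine Finset.sum_congr rfl fun k _ => ?_
      show A ((i : ℕ) + (k : ℕ)) * myComp r c k j = _
      simp only [myComp, Matrix.of_apply, if_pos hj]
      ring
    · have hj' : (j : ℕ) + 1 < r := lt_of_le_of_ne (Nat.succ_le_of_lt j.isLt) hj
      show _ = A ((i : ℕ) + (j : ℕ) + 1)
      rw [Finset.sum_eq_single (⟨(j : ℕ) + 1, hj'⟩ : Fin r)]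
      · simp only [myComp, Matrix.of_apply]
        rw [if_neg (by omega)]
        show A0 i ⟨(j : ℕ) + 1, hj'⟩ * _ = _
        simp only [hA0def, Matrix.of_apply]
        norm_num [add_assoc]
      · intro b _ hb
        simp only [myComp, Matrix.of_apply]
        rw [if_neg hj, if_neg (by simpa [Fin.ext_iff] using hb), mul_zero]
      · simp
  have h2 : A0⁻¹ * A1 = myComp r c := by
    rw [← h1, ← Matrix.mul_assoc, Matrix.nonsing_inv_mul _ hdet, Matrix.one_mul]
  have h3 : (myComp r c).charpoly = ∏ k : Fin r, (Polynomial.X - Polynomial.C (β k)) := by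
    rw [← h2]; exact hchar
  -- each β k is a root of the recurrence polynomial
  have h4 : ∀ k, β k ^ r + ∑ j : Fin r, c j * β k ^ (j : ℕ) = 0 := by
    intro k
    refine myCompRoot hr c (β k) ?_
    rw [← myEvalCharpoly, h3, Polynomial.eval_prod]
    exact Finset.prod_eq_zero (Finset.mem_univ k) (by simp)
  -- power sequences satisfy the recurrence
  have h5 : ∀ k, ∀ i, r ≤ i → β k ^ i = -(∑ j : Fin r, c j * β k ^ (i - r + (j : ℕ))) := by
    intro k i hi
    have hsplit : β k ^ i = β k ^ (i - r) * β k ^ r := by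
      rw [← pow_add]; congr 1; omega
    have hrk : β k ^ r = -∑ j : Fin r, c j * β k ^ (j : ℕ) :=
      eq_neg_of_add_eq_zero_left (h4 k)
    rw [hsplit, hrk, mul_neg, Finset.mul_sum, ← Finset.sum_neg_distrib,
      ← Finset.sum_neg_distrib]
    refine Finset.sum_congr rfl fun j _ => ?_
    rw [pow_add]
    ring
  -- Vandermonde
  set W : Matrix (Fin r) (Fin r) ℂ := (Matrix.vandermonde β).transpose with hWdef
  have hWdet : W.det ≠ 0 := by
    rw [Matrix.det_transpose]
    exact Matrix.det_vandermonde_ne_zero_iff.mpr hβ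
  have hWunit : IsUnit W.det := isUnit_iff_ne_zero.mpr hWdet
  set lam : Fin r → ℂ := Matrix.mulVec W⁻¹ (fun i : Fin r => A (i : ℕ)) with hlamdef
  have hWlam : Matrix.mulVec W lam = fun i : Fin r => A (i : ℕ) := by
    rw [hlamdef, Matrix.mulVec_mulVec, Matrix.mul_nonsing_inv _ hWunit, Matrix.one_mulVec]
  -- A i = Σ lam k β k ^ i for all i
  have hA : ∀ i, A i = ∑ k, lam k * β k ^ i := by
    intro i
    induction i using Nat.strong_induction_on with
    | _ i IH =>
      rcases lt_or_ge i r with hic | hic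
      · have := congrFun hWlam ⟨i, hic⟩
        simp only [Matrix.mulVec, dotProduct, hWdef, Matrix.transpose_apply,
          Matrix.vandermonde] at this
        rw [← this]
        exact Finset.sum_congr rfl fun k _ => by simp [mul_comm]
      · rw [hrec i hic]
        have hswap : (∑ j : Fin r, c j * A (i - r + (j : ℕ)))
            = ∑ k, lam k * ∑ j : Fin r, c j * β k ^ (i - r + (j : ℕ)) := by
          have hAj : ∀ j : Fin r, A (i - r + (j : ℕ))
              = ∑ k, lam k * β k ^ (i - r + (j : ℕ)) := by
            intro j
            exact IH _ (by omega)
          calc (∑ j : Fin r, c j * A (i - r + (j : ℕ)))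
              = ∑ j : Fin r, ∑ k, c j * (lam k * β k ^ (i - r + (j : ℕ))) := by
                refine Finset.sum_congr rfl fun j _ => ?_
                rw [hAj j, Finset.mul_sum]
            _ = ∑ k, ∑ j : Fin r, c j * (lam k * β k ^ (i - r + (j : ℕ))) :=
                Finset.sum_comm
            _ = ∑ k, lam k * ∑ j : Fin r, c j * β k ^ (i - r + (j : ℕ)) := by
                refine Finset.sum_congr rfl fun k _ => ?_
                rw [Finset.mul_sum]
                exact Finset.sum_congr rfl fun j _ => by ring
        rw [hswap, ← Finset.sum_neg_distrib]
        refine Finset.sum_congr rfl fun k _ => ?_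
        rw [h5 k i hic]
        ring
  -- lam k ≠ 0
  have hlamne : ∀ k, lam k ≠ 0 := by
    have hfact : A0 = (W * Matrix.diagonal lam) * W.transpose := by
      ext i j
      rw [Matrix.mul_apply]
      show A ((i : ℕ) + (j : ℕ)) = _
      rw [hA ((i : ℕ) + (j : ℕ))]
      refine Finset.sum_congr rfl fun k _ => ?_
      rw [Matrix.mul_diagonal]
      simp only [hWdef, Matrix.transpose_apply, Matrix.vandermonde, Matrix.of_apply]
      rw [pow_add]
      ring
    have hdet0 : A0.det = W.det * (∏ k, lam k) * W.det := by
      rw [hfact, Matrix.det_mul, Matrix.det_mul, Matrix.det_diagonal, hWdef,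
        Matrix.transpose_transpose, Matrix.det_transpose]
    have hprod : (∏ k, lam k) ≠ 0 := by
      intro hp
      rw [hp] at hdet0
      simp only [mul_zero, zero_mul] at hdet0
      exact (hdet.ne_zero hdet0).elim
    intro k
    exact Finset.prod_ne_zero_iff.mp hprod k (Finset.mem_univ k)
  -- conclusion
  refine ⟨lam, hlamne, ?_⟩
  have hbin : ∀ γ : ℂ, (linForm γ) ^ d
      = ∑ i ∈ Finset.range (d + 1),
          C (γ ^ i) * X 1 ^ i * X 0 ^ (d - i) * (d.choose i : MvPolynomial (Fin 2) ℂ) := by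
    intro γ
    rw [linForm, add_comm (X 0 : MvPolynomial (Fin 2) ℂ), add_pow]
    refine Finset.sum_congr rfl fun i hi => ?_
    rw [mul_pow, ← C_pow]
  calc (∑ i ∈ Finset.range (d + 1),
          C ((d.choose i : ℂ) * a i) * X 0 ^ (d - i) * X 1 ^ i)
      = ∑ i ∈ Finset.range (d + 1), ∑ k,
          C (lam k) * (C (β k ^ i) * X 1 ^ i * X 0 ^ (d - i)
            * (d.choose i : MvPolynomial (Fin 2) ℂ)) := by
        refine Finset.sum_congr rfl fun i hi => ?_
        have hid : i ≤ d := Nat.lt_succ_iff.mp (Finset.mem_range.mp hi)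
        rw [show a i = A i from (hAa i hid).symm, hA i, Finset.mul_sum, map_sum,
          Finset.sum_mul, Finset.sum_mul]
        refine Finset.sum_congr rfl fun k _ => ?_
        rw [C_mul, C_mul, C_pow, show ((d.choose i : ℂ)) = ((d.choose i : ℕ) : ℂ) from rfl,
          map_natCast C (d.choose i)]
        ring
    _ = ∑ k, C (lam k) * (linForm (β k)) ^ d := by
        rw [Finset.sum_comm]
        refine Finset.sum_congr rfl fun k _ => ?_
        rw [hbin (β k), Finset.mul_sum]
end

section
/- Let f ∈ ℂ[x,y]_d be a nonzero binary form of degree d ≥ 1 and let f_x = ∂f/∂x. Then FR(f) ≥ WR(f) ≥ FR(f_x) ≥ WR(f) − 1. -/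
open MvPolynomial

/-- The Waring rank of a binary form `f ∈ ℂ[x,y]_d`: the least `r` such that
`f = Σ_{k=1}^{r} λ_k L_k^d` with all `λ_k ∈ ℂ∖{0}` and `L_k` linear forms. -/
noncomputable def waringRank (d : ℕ) (f : MvPolynomial (Fin 2) ℂ) : ℕ :=
  sInf {r : ℕ | ∃ (lam : Fin r → ℂ) (L : Fin r → MvPolynomial (Fin 2) ℂ),
    (∀ k, lam k ≠ 0) ∧ (∀ k, (L k).IsHomogeneous 1) ∧ f = ∑ k, C (lam k) * (L k) ^ d}

/-- The F-rank of a binary form `f ∈ ℂ[x,y]_d`: the least `r ≥ 0` such that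
`f = Σ_{k=1}^{r} λ_k (x+β_k y)^d` for some `λ_k, β_k ∈ ℂ`. -/
noncomputable def fRank (d : ℕ) (f : MvPolynomial (Fin 2) ℂ) : ℕ :=
  sInf {r : ℕ | ∃ lam β : Fin r → ℂ, f = ∑ k, C (lam k) * (linForm (β k)) ^ d}

/-!
Every binary form of degree `d` is a combination of the powers `(x + k y)^d`, `k = 0, …, d`
(a Vandermonde system), so both ranks are attained. An `F`-decomposition is a Waring
decomposition once zero coefficients are dropped. Differentiating a Waring decomposition
termwise in `x` gives an `F`-decomposition of `f_x` of the same length, because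
`∂ₓ (a x + b y)^d = d a^d (x + (b/a) y)^(d-1)` for `a ≠ 0` and vanishes for `a = 0`.
Conversely, integrating an `F`-decomposition of `f_x` in `x` recovers `f` up to a form killed
by `∂ₓ`, that is, up to a multiple of `y^d`, which costs one more Waring term.
-/

open MvPolynomial Finset

noncomputable def expXY (a b : ℕ) : Fin 2 →₀ ℕ := Finsupp.single 0 a + Finsupp.single 1 b

@[simp] lemma expXY_apply_zero (a b : ℕ) : expXY a b 0 = a := by simp [expXY]

@[simp] lemma expXY_apply_one (a b : ℕ) : expXY a b 1 = b := by simp [expXY]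

lemma eq_expXY (m : Fin 2 →₀ ℕ) : m = expXY (m 0) (m 1) := by
  ext i
  fin_cases i <;> simp

lemma degree_eq_apply_zero_add_apply_one (m : Fin 2 →₀ ℕ) : m.degree = m 0 + m 1 := by
  simp [Finsupp.degree_eq_sum, Fin.sum_univ_two]

lemma eq_of_isHomogeneous_of_coeff_expXY_eq {R : Type*} [CommSemiring R] {d : ℕ}
    {p q : MvPolynomial (Fin 2) R} (hp : p.IsHomogeneous d) (hq : q.IsHomogeneous d)
    (h : ∀ j ≤ d, coeff (expXY (d - j) j) p = coeff (expXY (d - j) j) q) : p = q := by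
  ext m
  by_cases hm : m.degree = d
  · rw [degree_eq_apply_zero_add_apply_one] at hm
    rw [eq_expXY m, show m 0 = d - m 1 by omega]
    exact h _ (by omega)
  · rw [hp.coeff_eq_zero hm, hq.coeff_eq_zero hm]

lemma MvPolynomial.IsHomogeneous.exists_eq_C_mul_X_add_C_mul_X {R : Type*} [CommSemiring R]
    {L : MvPolynomial (Fin 2) R} (hL : L.IsHomogeneous 1) :
    ∃ a b : R, L = C a * X 0 + C b * X 1 := by
  refine ⟨coeff (expXY 1 0) L, coeff (expXY 0 1) L, eq_of_isHomogeneous_of_coeff_expXY_eq hL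
    ((isHomogeneous_C_mul_X _ _).add (isHomogeneous_C_mul_X _ _)) fun j hj ↦ ?_⟩
  interval_cases j <;> simp [expXY, coeff_C_mul, coeff_X, Finsupp.single_eq_single_iff]

lemma MvPolynomial.IsHomogeneous.eq_C_mul_X_pow_of_pderiv_eq_zero {R : Type*} [CommSemiring R]
    [NoZeroDivisors R] [CharZero R] {d : ℕ} {p : MvPolynomial (Fin 2) R}
    (hp : p.IsHomogeneous d) (hp' : pderiv 0 p = 0) :
    p = C (coeff (Finsupp.single 1 d) p) * X 1 ^ d := by
  ext m
  rw [C_mul_X_pow_eq_monomial, coeff_monomial]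
  split_ifs with hm
  · rw [hm]
  by_cases hm0 : m 0 = 0
  · apply hp.coeff_eq_zero
    rw [degree_eq_apply_zero_add_apply_one, hm0, zero_add]
    rintro rfl
    exact hm (by ext i; fin_cases i <;> simp [hm0])
  · have key := coeff_pderiv (i := 0) p (m - Finsupp.single 0 1)
    rw [hp', coeff_zero, tsub_add_cancel_of_le (by simpa [Nat.one_le_iff_ne_zero])] at key
    exact (mul_eq_zero.mp key.symm).resolve_right (Nat.cast_add_one_ne_zero _)

lemma isHomogeneous_linForm (β : ℂ) : (linForm β).IsHomogeneous 1 :=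
  (isHomogeneous_X ℂ 0).add (isHomogeneous_C_mul_X β 1)

lemma isHomogeneous_C_mul_linForm_pow (c β : ℂ) (d : ℕ) :
    (C c * linForm β ^ d).IsHomogeneous d := by
  simpa using ((isHomogeneous_linForm β).pow d).C_mul c

lemma coeff_expXY_linForm_pow (β : ℂ) {d j : ℕ} (hj : j ≤ d) :
    coeff (expXY (d - j) j) (linForm β ^ d) = β ^ j * d.choose j := by
  have hterm (m : ℕ) : (C β * X 1) ^ m * X 0 ^ (d - m) * (d.choose m : MvPolynomial (Fin 2) ℂ) =
      monomial (expXY (d - m) m) (β ^ m * d.choose m) := by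
    rw [mul_pow, ← C_pow, X_pow_eq_monomial, X_pow_eq_monomial, ← C_eq_coe_nat, C_mul_monomial,
      monomial_mul, mul_comm, C_mul_monomial]
    simp [expXY, add_comm, mul_comm]
  rw [linForm, add_comm, add_pow, coeff_sum, sum_eq_single j]
  · rw [hterm, coeff_monomial, if_pos rfl]
  · intro m _ hmj
    rw [hterm, coeff_monomial, if_neg fun h ↦ hmj (by simpa using congr($h 1))]
  · intro hj'
    exact absurd (mem_range.mpr (Nat.lt_succ_of_le hj)) hj'

lemma pderiv_C_mul_linForm_pow (c β : ℂ) (d : ℕ) :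
    pderiv 0 (C c * linForm β ^ d) = C (c * d) * linForm β ^ (d - 1) := by
  rw [pderiv_C_mul, pderiv_pow, show pderiv 0 (linForm β) = 1 by simp [linForm], mul_one, C_mul,
    map_natCast, mul_assoc]

lemma exists_eq_sum_linForm_pow {d : ℕ} {f : MvPolynomial (Fin 2) ℂ} (hf : f.IsHomogeneous d) :
    ∃ lam β : Fin (d + 1) → ℂ, f = ∑ k, C (lam k) * linForm (β k) ^ d := by
  have hV : IsUnit (Matrix.vandermonde fun k : Fin (d + 1) ↦ (k : ℂ)) :=
    (Matrix.isUnit_iff_isUnit_det _).mpr <| isUnit_iff_ne_zero.mpr <|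
      Matrix.det_vandermonde_ne_zero_iff.mpr (Nat.cast_injective.comp Fin.val_injective)
  obtain ⟨lam, hlam⟩ := Matrix.vecMul_surjective_iff_isUnit.mpr hV
    fun j ↦ coeff (expXY (d - j) j) f / d.choose j
  refine ⟨lam, fun k ↦ k, eq_of_isHomogeneous_of_coeff_expXY_eq hf
    (IsHomogeneous.sum _ _ _ fun k _ ↦ isHomogeneous_C_mul_linForm_pow _ _ _) fun j hj ↦ ?_⟩
  have hj' := congrFun hlam ⟨j, Nat.lt_succ_of_le hj⟩
  have hchoose : (d.choose j : ℂ) ≠ 0 := Nat.cast_ne_zero.mpr (Nat.choose_pos hj).ne'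
  simp only [Matrix.vecMul, dotProduct, Matrix.vandermonde_apply] at hj'
  simp only [coeff_sum, coeff_C_mul, coeff_expXY_linForm_pow _ hj, ← mul_assoc, ← sum_mul, hj',
    div_mul_cancel₀ _ hchoose]

lemma exists_pderiv_C_mul_pow_eq (lam : ℂ) {L : MvPolynomial (Fin 2) ℂ} (hL : L.IsHomogeneous 1)
    (d : ℕ) : ∃ μ β : ℂ, pderiv 0 (C lam * L ^ d) = C μ * linForm β ^ (d - 1) := by
  obtain ⟨a, b, rfl⟩ := hL.exists_eq_C_mul_X_add_C_mul_X
  by_cases ha : a = 0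
  · exact ⟨0, 0, by simp [ha]⟩
  · refine ⟨lam * a ^ d * d, b / a, ?_⟩
    have hL : C a * X 0 + C b * X 1 = C a * linForm (b / a) := by
      rw [linForm, mul_add, ← mul_assoc, ← C_mul, mul_div_cancel₀ _ ha]
    rw [hL, mul_pow, ← mul_assoc, ← C_pow, ← C_mul, pderiv_C_mul_linForm_pow]

lemma exists_pderiv_eq_sum_linForm_pow {r d : ℕ} {f : MvPolynomial (Fin 2) ℂ} (lam : Fin r → ℂ)
    (L : Fin r → MvPolynomial (Fin 2) ℂ) (hL : ∀ k, (L k).IsHomogeneous 1)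
    (h : f = ∑ k, C (lam k) * L k ^ d) :
    ∃ μ β : Fin r → ℂ, pderiv 0 f = ∑ k, C (μ k) * linForm (β k) ^ (d - 1) := by
  choose μ β hμβ using fun k ↦ exists_pderiv_C_mul_pow_eq (lam k) (hL k) d
  exact ⟨μ, β, by rw [h, map_sum]; exact sum_congr rfl fun k _ ↦ hμβ k⟩

lemma exists_waringDecomposition_of_eq_sum {ι : Type*} [Fintype ι] {d : ℕ}
    {f : MvPolynomial (Fin 2) ℂ} (lam : ι → ℂ) (L : ι → MvPolynomial (Fin 2) ℂ)
    (hL : ∀ k, (L k).IsHomogeneous 1) (h : f = ∑ k, C (lam k) * L k ^ d) :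
    ∃ n ≤ Fintype.card ι, ∃ (lam' : Fin n → ℂ) (L' : Fin n → MvPolynomial (Fin 2) ℂ),
      (∀ k, lam' k ≠ 0) ∧ (∀ k, (L' k).IsHomogeneous 1) ∧ f = ∑ k, C (lam' k) * L' k ^ d := by
  classical
  let e := Fintype.equivFin {k // lam k ≠ 0}
  refine ⟨_, Fintype.card_subtype_le _, fun i ↦ lam (e.symm i), fun i ↦ L (e.symm i),
    fun i ↦ (e.symm i).2, fun i ↦ hL _, ?_⟩
  rw [h, ← Fintype.sum_subtype_add_sum_subtype (fun k ↦ lam k ≠ 0) fun k ↦ C (lam k) * L k ^ d,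
    e.symm.sum_comp fun k : {k // lam k ≠ 0} ↦ C (lam k) * L k ^ d, add_eq_left]
  exact sum_eq_zero fun k _ ↦ by simp [not_not.mp k.2]

lemma waringRank_le_of_eq_sum {ι : Type*} [Fintype ι] {d : ℕ} {f : MvPolynomial (Fin 2) ℂ}
    (lam : ι → ℂ) (L : ι → MvPolynomial (Fin 2) ℂ) (hL : ∀ k, (L k).IsHomogeneous 1)
    (h : f = ∑ k, C (lam k) * L k ^ d) : waringRank d f ≤ Fintype.card ι := by
  obtain ⟨n, hn, hmem⟩ := exists_waringDecomposition_of_eq_sum lam L hL h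
  exact (Nat.sInf_le hmem).trans hn

lemma exists_eq_sum_fRank {d : ℕ} {f : MvPolynomial (Fin 2) ℂ} (hf : f.IsHomogeneous d) :
    ∃ lam β : Fin (fRank d f) → ℂ, f = ∑ k, C (lam k) * linForm (β k) ^ d :=
  Nat.sInf_mem (s := {r | ∃ lam β : Fin r → ℂ, f = ∑ k, C (lam k) * linForm (β k) ^ d})
    ⟨_, exists_eq_sum_linForm_pow hf⟩

lemma exists_eq_sum_waringRank {d : ℕ} {f : MvPolynomial (Fin 2) ℂ} (hf : f.IsHomogeneous d) :
    ∃ (lam : Fin (waringRank d f) → ℂ) (L : Fin (waringRank d f) → MvPolynomial (Fin 2) ℂ),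
      (∀ k, lam k ≠ 0) ∧ (∀ k, (L k).IsHomogeneous 1) ∧ f = ∑ k, C (lam k) * L k ^ d := by
  obtain ⟨lam, β, h⟩ := exists_eq_sum_linForm_pow hf
  obtain ⟨n, -, hmem⟩ :=
    exists_waringDecomposition_of_eq_sum lam _ (fun k ↦ isHomogeneous_linForm (β k)) h
  exact Nat.sInf_mem (s := {r | ∃ (lam : Fin r → ℂ) (L : Fin r → MvPolynomial (Fin 2) ℂ),
    (∀ k, lam k ≠ 0) ∧ (∀ k, (L k).IsHomogeneous 1) ∧ f = ∑ k, C (lam k) * L k ^ d}) ⟨n, hmem⟩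

theorem waringRank_le_fRank {d : ℕ} {f : MvPolynomial (Fin 2) ℂ} (hf : f.IsHomogeneous d) :
    waringRank d f ≤ fRank d f := by
  obtain ⟨lam, β, h⟩ := exists_eq_sum_fRank hf
  simpa using waringRank_le_of_eq_sum lam _ (fun k ↦ isHomogeneous_linForm (β k)) h

theorem fRank_pderiv_le_waringRank {d : ℕ} {f : MvPolynomial (Fin 2) ℂ}
    (hf : f.IsHomogeneous d) : fRank (d - 1) (pderiv 0 f) ≤ waringRank d f := by
  obtain ⟨lam, L, -, hL, h⟩ := exists_eq_sum_waringRank hf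
  obtain ⟨μ, β, h'⟩ := exists_pderiv_eq_sum_linForm_pow lam L hL h
  exact Nat.sInf_le ⟨μ, β, h'⟩

theorem waringRank_le_fRank_pderiv_add_one {d : ℕ} (hd : d ≠ 0) {f : MvPolynomial (Fin 2) ℂ}
    (hf : f.IsHomogeneous d) : waringRank d f ≤ fRank (d - 1) (pderiv 0 f) + 1 := by
  obtain ⟨lam, β, hfx⟩ := exists_eq_sum_fRank hf.pderiv
  set g := ∑ k, C (lam k / d) * linForm (β k) ^ d
  have hg : pderiv 0 g = pderiv 0 f := by
    rw [map_sum]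
    conv_rhs => rw [hfx]
    refine sum_congr rfl fun k _ ↦ ?_
    rw [pderiv_C_mul_linForm_pow, div_mul_cancel₀ _ (Nat.cast_ne_zero.mpr hd)]
  have hfg : (f - g).IsHomogeneous d :=
    hf.sub (IsHomogeneous.sum _ _ _ fun k _ ↦ isHomogeneous_C_mul_linForm_pow _ _ _)
  set c := coeff (Finsupp.single 1 d) (f - g)
  have hc : f - g = C c * X 1 ^ d :=
    hfg.eq_C_mul_X_pow_of_pderiv_eq_zero (by rw [map_sub, hg, sub_self])
  have h : f = ∑ o : Option (Fin (fRank (d - 1) (pderiv 0 f))),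
      C (o.elim c (lam · / d)) * o.elim (X 1) (linForm ∘ β) ^ d := by
    rw [Fintype.sum_option]
    simp only [Option.elim_none, Option.elim_some, Function.comp_apply]
    rw [← hc, sub_add_cancel]
  simpa using waringRank_le_of_eq_sum _ _
    (by rintro (_ | k); exacts [isHomogeneous_X ℂ 1, isHomogeneous_linForm (β k)]) h

theorem fRank_waringRank_inequalities_general (d : ℕ) (hd : 1 ≤ d) (f : MvPolynomial (Fin 2) ℂ)
    (hf : f.IsHomogeneous d) :
    waringRank d f ≤ fRank d f ∧
      fRank (d - 1) (pderiv (0 : Fin 2) f) ≤ waringRank d f ∧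
      waringRank d f - 1 ≤ fRank (d - 1) (pderiv (0 : Fin 2) f) :=
  ⟨waringRank_le_fRank hf, fRank_pderiv_le_waringRank hf,
    Nat.sub_le_of_le_add (waringRank_le_fRank_pderiv_add_one (by omega) hf)⟩

/-- For a nonzero binary form `f ∈ ℂ[x,y]_d`, `d ≥ 1`, with `f_x = ∂f/∂x`:
`FR(f) ≥ WR(f) ≥ FR(f_x) ≥ WR(f) − 1`. -/
theorem fRank_waringRank_inequalities (d : ℕ) (hd : 1 ≤ d) (f : MvPolynomial (Fin 2) ℂ)
    (hf : f.IsHomogeneous d) (hf0 : f ≠ 0) :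
    waringRank d f ≤ fRank d f ∧
      fRank (d - 1) (pderiv (0 : Fin 2) f) ≤ waringRank d f ∧
      waringRank d f - 1 ≤ fRank (d - 1) (pderiv (0 : Fin 2) f) :=
  fRank_waringRank_inequalities_general d hd f hf
end

section
/- Let f ∈ ℂ[x,y]_d and let r satisfy 2r ≤ d+1. Suppose there exist λ_1, …, λ_r ∈ ℂ∖{0} and pairwise distinct β_1, …, β_r ∈ ℂ such that f(x,y) = Σ_{k=1}^{r} λ_k (x+β_k y)^d. Then WR(f) = r, and the minimal decomposition of f is unique: whenever f = Σ_{ℓ=1}^{s} μ_ℓ M_ℓ^d with s ≤ r, μ_1, …, μ_s ∈ ℂ∖{0}, and pairwise non-proportional linear forms M_1, …, M_s ∈ ℂ[x,y]_1, one has s = r and there is a permutation σ of {1,…,r} such that μ_ℓ M_ℓ^d = λ_{σ(ℓ)} (x+β_{σ(ℓ)} y)^d for all ℓ. -/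
/-!
Comparing the coefficients of `x ^ m * y ^ n`, a relation `∑ cᵢ (aᵢ x + bᵢ y) ^ d = 0` gives
`∑ cᵢ aᵢ ^ m bᵢ ^ n = 0` for all `m + n = d`; for at most `d + 1` pairwise non-proportional
points `(aᵢ, bᵢ)` this homogeneous Vandermonde system forces every `cᵢ = 0`.
Group the summands of two decompositions of `f` by the point of `ℙ¹` their linear forms define.
Since `r + s ≤ 2r ≤ d + 1`, the grouped coefficients of the two decompositions agree, so each
`x + β_k y` is proportional to some `M_ℓ`, whence `s ≥ r`; and if `s ≤ r` and the `M_ℓ` are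
pairwise non-proportional, this matching is a bijection under which the summands coincide.
-/

open MvPolynomial

open Finset

theorem eq_zero_of_forall_sum_mul_pow_mul_pow_eq_zero {R ι : Type*} [CommRing R] [IsDomain R]
    [DecidableEq ι] {d : ℕ} {D : Finset ι} (hD : #D ≤ d + 1) {p : ι → R × R}
    (hp0 : ∀ i ∈ D, p i ≠ 0)
    (hp : ∀ i ∈ D, ∀ j ∈ D, i ≠ j → (p i).1 * (p j).2 ≠ (p i).2 * (p j).1) {g : ι → R}
    (h : ∀ m n, m + n = d → ∑ i ∈ D, g i * ((p i).1 ^ m * (p i).2 ^ n) = 0) :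
    ∀ i ∈ D, g i = 0 := by
  induction D using Finset.induction_on generalizing d g with
  | empty => simp
  | insert i₀ D hi₀ ih =>
    have hgD : ∀ i ∈ D, g i = 0 := by
      cases d with
      | zero => simp_all
      | succ e =>
        -- Weighting by the determinant against `p i₀` kills the `i₀`-th term and lowers `d`.
        set g' := fun i => g i * ((p i₀).1 * (p i).2 - (p i₀).2 * (p i).1)
        have hg' : ∀ i ∈ D, g' i = 0 := by
          refine ih (by simpa [card_insert_of_notMem hi₀] using hD)
            (fun i hi => hp0 i (mem_insert_of_mem hi))
            (fun i hi j hj => hp i (mem_insert_of_mem hi) j (mem_insert_of_mem hj))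
            fun m n hmn => ?_
          have h₁ := h m (n + 1) (by omega)
          have h₂ := h (m + 1) n (by omega)
          rw [sum_insert hi₀] at h₁ h₂
          calc ∑ i ∈ D, g' i * ((p i).1 ^ m * (p i).2 ^ n)
              = (p i₀).1 * ∑ i ∈ D, g i * ((p i).1 ^ m * (p i).2 ^ (n + 1))
                - (p i₀).2 * ∑ i ∈ D, g i * ((p i).1 ^ (m + 1) * (p i).2 ^ n) := by
                rw [mul_sum, mul_sum, ← sum_sub_distrib]
                exact sum_congr rfl fun i _ => by ring
            _ = 0 := by linear_combination (p i₀).1 * h₁ - (p i₀).2 * h₂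
        intro i hi
        have hdet := hp i₀ (mem_insert_self _ _) i (mem_insert_of_mem hi)
          (by rintro rfl; exact hi₀ hi)
        exact (mul_eq_zero.mp (hg' i hi)).resolve_right (sub_ne_zero.mpr hdet)
    have hg₀ : ∀ m n, m + n = d → g i₀ * ((p i₀).1 ^ m * (p i₀).2 ^ n) = 0 := fun m n hmn => by
      rw [← h m n hmn, sum_insert hi₀, sum_eq_zero fun i hi => by rw [hgD i hi, zero_mul],
        add_zero]
    have hgi₀ : g i₀ = 0 := by
      by_contra hne
      apply hp0 i₀ (mem_insert_self _ _)
      ext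
      · exact (pow_eq_zero_iff'.mp <| by simpa only [pow_zero, mul_one] using
          (mul_eq_zero.mp (hg₀ d 0 (add_zero d))).resolve_left hne).1
      · exact (pow_eq_zero_iff'.mp <| by simpa only [pow_zero, one_mul] using
          (mul_eq_zero.mp (hg₀ 0 d (zero_add d))).resolve_left hne).1
    intro i hi
    rcases mem_insert.mp hi with rfl | hi
    exacts [hgi₀, hgD i hi]

noncomputable def linearForm {R : Type*} [CommSemiring R] (v : R × R) : MvPolynomial (Fin 2) R :=
  C v.1 * X 0 + C v.2 * X 1

theorem coeff_linearForm_pow {R : Type*} [CommSemiring R] (v : R × R) (m n : ℕ) :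
    coeff (Finsupp.single 0 m + Finsupp.single 1 n) (linearForm v ^ (m + n)) =
      (m + n).choose m * (v.1 ^ m * v.2 ^ n) := by
  set e : Fin 2 →₀ ℕ := Finsupp.single 0 m + Finsupp.single 1 n
  have he : linearForm v = ∑ i, ![v.1, v.2] i • X i := by
    simp [linearForm, Fin.sum_univ_two, smul_eq_C_mul]
  have hsum : e.sum (fun _ k ↦ k) = m + n := by
    simp [e, Finsupp.sum_of_support_subset e (Finset.subset_univ e.support)]
  rw [he, coeff_linearCombination_X_pow_of_fintype, if_pos hsum,
    Finsupp.multinomial_eq_of_support_subset (Finset.subset_univ e.support), Finset.univ_fin2,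
      Nat.binomial_eq_choose Fin.zero_ne_one]
  simp [e, Finsupp.prod_fintype]

theorem isHomogeneous_linearForm {R : Type*} [CommSemiring R] (v : R × R) :
    (linearForm v).IsHomogeneous 1 :=
  (isHomogeneous_C_mul_X _ _).add (isHomogeneous_C_mul_X _ _)

theorem exists_linearForm_eq {R : Type*} [CommSemiring R] {p : MvPolynomial (Fin 2) R}
    (hp : p.IsHomogeneous 1) : ∃ v : R × R, linearForm v = p := by
  rw [← mem_homogeneousSubmodule, homogeneousSubmodule_one_eq_span_X,
    Submodule.mem_span_range_iff_exists_fun] at hp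
  obtain ⟨c, rfl⟩ := hp
  exact ⟨(c 0, c 1), by simp [linearForm, Fin.sum_univ_two, smul_eq_C_mul]⟩

theorem linForm_eq_linearForm (β : ℂ) : linForm β = linearForm (1, β) := by
  simp [linForm, linearForm]

theorem linearForm_smul {R : Type*} [CommSemiring R] (c : R) (v : R × R) :
    linearForm (c • v) = C c * linearForm v := by
  simp only [linearForm, Prod.smul_fst, Prod.smul_snd, smul_eq_mul, C_mul]; ring

theorem eq_zero_of_sum_C_mul_linearForm_pow_eq_zero {R ι : Type*} [CommRing R] [IsDomain R]
    [CharZero R] [DecidableEq ι] {d : ℕ} {D : Finset ι} (hD : #D ≤ d + 1) {p : ι → R × R}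
    (hp0 : ∀ i ∈ D, p i ≠ 0)
    (hp : ∀ i ∈ D, ∀ j ∈ D, i ≠ j → (p i).1 * (p j).2 ≠ (p i).2 * (p j).1) {g : ι → R}
    (h : ∑ i ∈ D, C (g i) * linearForm (p i) ^ d = 0) :
    ∀ i ∈ D, g i = 0 := by
  refine eq_zero_of_forall_sum_mul_pow_mul_pow_eq_zero hD hp0 hp fun m n hmn => ?_
  subst hmn
  have hcoeff := congrArg (coeff (Finsupp.single 0 m + Finsupp.single 1 n)) h
  simp only [coeff_sum, coeff_C_mul, coeff_linearForm_pow, coeff_zero] at hcoeff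
  have hchoose : ((m + n).choose m : R) ≠ 0 :=
    Nat.cast_ne_zero.mpr (Nat.choose_pos (by omega)).ne'
  rw [← mul_right_inj' hchoose, mul_zero, mul_sum, ← hcoeff]
  exact sum_congr rfl fun i _ => by ring

theorem sum_fiberwise_C_mul {σ R α β : Type*} [CommSemiring R] [DecidableEq β] {s : Finset α}
    {D : Finset β} {ε : α → β} (hε : ∀ a ∈ s, ε a ∈ D) (e : α → R) (F : β → MvPolynomial σ R) :
    ∑ u ∈ D, C (∑ a ∈ s with ε a = u, e a) * F u = ∑ a ∈ s, C (e a) * F (ε a) := by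
  rw [← sum_fiberwise_of_maps_to hε]
  refine sum_congr rfl fun u _ => ?_
  rw [map_sum, sum_mul]
  exact sum_congr rfl fun a ha => by rw [(mem_filter.mp ha).2]

section Direction

variable {K : Type*} [Field K]

/-- Points of `ℙ¹(K)` as `Option K`: `none` is the direction of `y`, `some β` that of `x + β y`. -/
def dirVec : Option K → K × K
  | none => (0, 1)
  | some β => (1, β)

open Classical in
noncomputable def direction (v : K × K) : Option K := if v.1 = 0 then none else some (v.2 / v.1)

open Classical in
noncomputable def scale (v : K × K) : K := if v.1 = 0 then v.2 else v.1

theorem scale_smul_dirVec_direction (v : K × K) : scale v • dirVec (direction v) = v := by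
  by_cases h : v.1 = 0 <;> ext <;> simp [scale, direction, dirVec, h, mul_div_cancel₀]

theorem dirVec_ne_zero (δ : Option K) : dirVec δ ≠ 0 := by
  cases δ <;> simp [dirVec]

theorem dirVec_det_ne_zero {δ δ' : Option K} (h : δ ≠ δ') :
    (dirVec δ).1 * (dirVec δ').2 ≠ (dirVec δ).2 * (dirVec δ').1 := by
  cases δ <;> cases δ' <;> simp_all [dirVec, eq_comm]

theorem scale_ne_zero {v : K × K} (hv : v ≠ 0) : scale v ≠ 0 := by
  unfold scale; split_ifs with h
  · exact fun h' => hv (Prod.ext h h')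
  · exact h

theorem C_mul_linearForm_pow (c : K) (v : K × K) (d : ℕ) :
    C c * linearForm v ^ d = C (c * scale v ^ d) * linearForm (dirVec (direction v)) ^ d := by
  conv_lhs => rw [← scale_smul_dirVec_direction v, linearForm_smul]
  simp only [mul_pow, C_mul, C_pow, mul_assoc]

theorem injective_direction {ι : Type*} {v : ι → K × K}
    (hv : ∀ i j, i ≠ j → ∀ t : K, v i ≠ t • v j) : Function.Injective (direction ∘ v) := by
  intro i j hij
  by_contra hne
  by_cases hj : v j = 0
  · exact hv j i (Ne.symm hne) 0 (by rw [hj, zero_smul])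
  · apply hv i j hne (scale (v i) / scale (v j))
    calc v i = scale (v i) • dirVec (direction (v i)) := (scale_smul_dirVec_direction _).symm
      _ = (scale (v i) / scale (v j)) • scale (v j) • dirVec (direction (v j)) := by
        rw [smul_smul, div_mul_cancel₀ _ (scale_ne_zero hj)]; exact congrArg _ (congrArg _ hij)
      _ = (scale (v i) / scale (v j)) • v j := by rw [scale_smul_dirVec_direction]

theorem sum_fiber_eq_sum_fiber [CharZero K] [DecidableEq K] {ι κ : Type*} [Fintype ι]
    [Fintype κ] {d : ℕ} (hcard : Fintype.card ι + Fintype.card κ ≤ d + 1) {δ : ι → Option K}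
    {δ' : κ → Option K} {c : ι → K} {c' : κ → K}
    (h : ∑ i, C (c i) * linearForm (dirVec (δ i)) ^ d =
      ∑ j, C (c' j) * linearForm (dirVec (δ' j)) ^ d) (t : Option K) :
    ∑ i with δ i = t, c i = ∑ j with δ' j = t, c' j := by
  set D := univ.image δ ∪ univ.image δ'
  by_cases ht : t ∈ D
  · rw [← sub_eq_zero]
    refine eq_zero_of_sum_C_mul_linearForm_pow_eq_zero (d := d) (D := D) (p := dirVec)
      (g := fun u => ∑ i with δ i = u, c i - ∑ j with δ' j = u, c' j) ?_
      (fun _ _ => dirVec_ne_zero _) (fun _ _ _ _ => dirVec_det_ne_zero) ?_ t ht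
    · exact (card_union_le _ _).trans (le_trans (add_le_add card_image_le card_image_le) hcard)
    · simp only [map_sub, sub_mul, sum_sub_distrib]
      rw [sum_fiberwise_C_mul (fun i _ => mem_union_left _ (mem_image_of_mem δ (mem_univ i))),
        sum_fiberwise_C_mul (fun j _ => mem_union_right _ (mem_image_of_mem δ' (mem_univ j))), h,
        sub_self]
  · rw [sum_eq_zero, sum_eq_zero] <;> intro a ha <;> refine absurd ?_ ht <;>
      rw [← (mem_filter.mp ha).2]
    exacts [mem_union_right _ (mem_image_of_mem δ' (mem_univ a)),
      mem_union_left _ (mem_image_of_mem δ (mem_univ a))]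

theorem sum_scale_pow_fiber_eq [CharZero K] [DecidableEq K] {d r s : ℕ} (hrs : r + s ≤ d + 1)
    {lam β : Fin r → K} (hβ : Function.Injective β) (μ : Fin s → K) (v : Fin s → K × K)
    (heq : ∑ k, C (lam k) * linearForm (1, β k) ^ d = ∑ ℓ, C (μ ℓ) * linearForm (v ℓ) ^ d)
    (k : Fin r) :
    ∑ ℓ with direction (v ℓ) = some (β k), μ ℓ * scale (v ℓ) ^ d = lam k := by
  have hfib := sum_fiber_eq_sum_fiber (δ := fun k => some (β k))
    (δ' := fun ℓ => direction (v ℓ))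
    (c' := fun ℓ => μ ℓ * scale (v ℓ) ^ d) (by simpa only [Fintype.card_fin] using hrs)
    (heq.trans (sum_congr rfl fun ℓ _ => C_mul_linearForm_pow _ _ _)) (some (β k))
  rw [← hfib]
  simp [hβ.eq_iff, filter_eq']

theorem exists_injective_direction_eq [CharZero K] {d r s : ℕ} (hrs : r + s ≤ d + 1)
    {lam β : Fin r → K} (hlam : ∀ k, lam k ≠ 0) (hβ : Function.Injective β) (μ : Fin s → K)
    (v : Fin s → K × K)
    (heq : ∑ k, C (lam k) * linearForm (1, β k) ^ d = ∑ ℓ, C (μ ℓ) * linearForm (v ℓ) ^ d) :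
    ∃ τ : Fin r → Fin s, Function.Injective τ ∧ ∀ k, direction (v (τ k)) = some (β k) := by
  classical
  have hex (k : Fin r) : ∃ ℓ, direction (v ℓ) = some (β k) := by
    obtain ⟨ℓ, hℓ, -⟩ := exists_ne_zero_of_sum_ne_zero
      ((sum_scale_pow_fiber_eq hrs hβ μ v heq k).trans_ne (hlam k))
    exact ⟨ℓ, (mem_filter.mp hℓ).2⟩
  choose τ hτ using hex
  exact ⟨τ, fun k k' h => hβ (Option.some_injective _ ((hτ k).symm.trans (h ▸ hτ k'))), hτ⟩

theorem exists_equiv_of_injective_direction [CharZero K] {d r s : ℕ} (hrs : r + s ≤ d + 1)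
    (hsr : s ≤ r) {lam β : Fin r → K} (hlam : ∀ k, lam k ≠ 0) (hβ : Function.Injective β)
    (μ : Fin s → K) {v : Fin s → K × K} (hv : Function.Injective (direction ∘ v))
    (heq : ∑ k, C (lam k) * linearForm (1, β k) ^ d = ∑ ℓ, C (μ ℓ) * linearForm (v ℓ) ^ d) :
    s = r ∧ ∃ σ : Fin s ≃ Fin r, ∀ ℓ,
      C (μ ℓ) * linearForm (v ℓ) ^ d = C (lam (σ ℓ)) * linearForm (1, β (σ ℓ)) ^ d := by
  classical
  obtain ⟨τ, hτ, hdir⟩ := exists_injective_direction_eq hrs hlam hβ μ v heq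
  have hrs' : r ≤ s := by simpa using Fintype.card_le_of_injective τ hτ
  have hbij : Function.Bijective τ :=
    (Fintype.bijective_iff_injective_and_card τ).mpr ⟨hτ, by simp; omega⟩
  set σ := (Equiv.ofBijective τ hbij).symm
  refine ⟨le_antisymm hsr hrs', σ, fun ℓ => ?_⟩
  have hτσ : τ (σ ℓ) = ℓ := Equiv.ofBijective_apply_symm_apply τ hbij ℓ
  have hdirℓ : direction (v ℓ) = some (β (σ ℓ)) := by rw [← hdir, hτσ]
  have hfiber : ({ℓ' | direction (v ℓ') = some (β (σ ℓ))} : Finset (Fin s)) = {ℓ} := by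
    ext ℓ'
    rw [mem_filter, mem_singleton, ← hdirℓ]
    exact ⟨fun h => hv h.2, fun h => ⟨mem_univ _, h ▸ rfl⟩⟩
  have hcoeff := sum_scale_pow_fiber_eq hrs hβ μ v heq (σ ℓ)
  rw [hfiber, sum_singleton] at hcoeff
  rw [C_mul_linearForm_pow, hcoeff, hdirℓ]
  rfl

end Direction

theorem waring_decomposition_unique_general (d r : ℕ) (h2r : 2 * r ≤ d + 1)
    (f : MvPolynomial (Fin 2) ℂ)
    (lam : Fin r → ℂ) (hlam : ∀ k, lam k ≠ 0)
    (β : Fin r → ℂ) (hβ : Function.Injective β)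
    (hsum : f = ∑ k, C (lam k) * (linForm (β k)) ^ d) :
    IsLeast {s : ℕ | ∃ (μ : Fin s → ℂ) (M : Fin s → MvPolynomial (Fin 2) ℂ),
        (∀ ℓ, μ ℓ ≠ 0) ∧ (∀ ℓ, (M ℓ).IsHomogeneous 1) ∧
        f = ∑ ℓ, C (μ ℓ) * (M ℓ) ^ d} r ∧
      ∀ (s : ℕ), s ≤ r → ∀ (μ : Fin s → ℂ) (M : Fin s → MvPolynomial (Fin 2) ℂ),
        (∀ ℓ, μ ℓ ≠ 0) → (∀ ℓ, (M ℓ).IsHomogeneous 1) →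
        (∀ ℓ ℓ', ℓ ≠ ℓ' → ∀ t : ℂ, M ℓ ≠ C t * M ℓ') →
        f = ∑ ℓ, C (μ ℓ) * (M ℓ) ^ d →
        s = r ∧ ∃ σ : Fin s ≃ Fin r, ∀ ℓ,
          C (μ ℓ) * (M ℓ) ^ d = C (lam (σ ℓ)) * (linForm (β (σ ℓ))) ^ d := by
  simp only [linForm_eq_linearForm] at hsum ⊢
  refine ⟨⟨⟨lam, _, hlam, fun k => isHomogeneous_linearForm _, hsum⟩, ?_⟩, ?_⟩
  · rintro s ⟨μ, M, -, hM, hfs⟩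
    by_contra! hsr
    choose v hv using fun ℓ => exists_linearForm_eq (hM ℓ)
    obtain rfl : (fun ℓ => linearForm (v ℓ)) = M := funext hv
    obtain ⟨τ, hτ, -⟩ :=
      exists_injective_direction_eq (by omega) hlam hβ μ v (hsum.symm.trans hfs)
    exact hsr.not_ge (by simpa using Fintype.card_le_of_injective τ hτ)
  · intro s hsr μ M _ hM hprop hfs
    choose v hv using fun ℓ => exists_linearForm_eq (hM ℓ)
    obtain rfl : (fun ℓ => linearForm (v ℓ)) = M := funext hv
    have hdir : Function.Injective (direction ∘ v) := injective_direction fun ℓ ℓ' hne t h =>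
      hprop ℓ ℓ' hne t (linearForm_smul t (v ℓ') ▸ congrArg linearForm h)
    exact exists_equiv_of_injective_direction (by omega) hsr hlam hβ μ hdir (hsum.symm.trans hfs)

/-- Let `f ∈ ℂ[x,y]_d` and `2r ≤ d+1`. If `f = Σ_{k=1}^{r} λ_k (x+β_k y)^d` with all
`λ_k ≠ 0` and `β_1, …, β_r` pairwise distinct, then `WR(f) = r` and the minimal decomposition
is unique: whenever `f = Σ_{ℓ=1}^{s} μ_ℓ M_ℓ^d` with `s ≤ r`, all `μ_ℓ ≠ 0`, and pairwise
non-proportional linear forms `M_ℓ`, one has `s = r` and the summands agree up to a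
permutation. -/
theorem waring_decomposition_unique (d r : ℕ) (h2r : 2 * r ≤ d + 1)
    (f : MvPolynomial (Fin 2) ℂ) (hf : f.IsHomogeneous d)
    (lam : Fin r → ℂ) (hlam : ∀ k, lam k ≠ 0)
    (β : Fin r → ℂ) (hβ : Function.Injective β)
    (hsum : f = ∑ k, C (lam k) * (linForm (β k)) ^ d) :
    IsLeast {s : ℕ | ∃ (μ : Fin s → ℂ) (M : Fin s → MvPolynomial (Fin 2) ℂ),
        (∀ ℓ, μ ℓ ≠ 0) ∧ (∀ ℓ, (M ℓ).IsHomogeneous 1) ∧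
        f = ∑ ℓ, C (μ ℓ) * (M ℓ) ^ d} r ∧
      ∀ (s : ℕ), s ≤ r → ∀ (μ : Fin s → ℂ) (M : Fin s → MvPolynomial (Fin 2) ℂ),
        (∀ ℓ, μ ℓ ≠ 0) → (∀ ℓ, (M ℓ).IsHomogeneous 1) →
        (∀ ℓ ℓ', ℓ ≠ ℓ' → ∀ t : ℂ, M ℓ ≠ C t * M ℓ') →
        f = ∑ ℓ, C (μ ℓ) * (M ℓ) ^ d →
        s = r ∧ ∃ σ : Fin s ≃ Fin r, ∀ ℓ,
          C (μ ℓ) * (M ℓ) ^ d = C (lam (σ ℓ)) * (linForm (β (σ ℓ))) ^ d :=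
  waring_decomposition_unique_general d r h2r f lam hlam β hβ hsum
end
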